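/- arXiv:1106.0996 — 3 statements merged into one kernel-verified Lean document; each statement's English description precedes it below -/
import Mathlib

section
/- Let g be C^{q+2} near 0. Then as y, w → 0 with w - y → 0, the difference T_q := g'(w) - g'_q satisfies T_q = (g^{(q+1)}(y)/(q+1)!)·(w-y)^q + O((w-y)^{q+1}), i.e. |T_q - (g^{(q+1)}(y)/(q+1)!)(w-y)^q| ≤ C·|w-y|^{q+1} for some constant C on a neighborhood of 0. -/
/-!
Expand `g'` around `y` to order `q` and `g` to order `q + 1`; by Lagrange's form of the
remainder both errors are controlled by a bound `M` for `g^(q+2)` near `0`, and the error of `g`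
enters divided by `w - y`, so both contribute `O(|w - y| ^ (q + 1))`. In the resulting combination
the coefficient of `g^(k)(y) (w - y) ^ (k - 1)` is `1/(k-1)! - q/k! - (k-q)/k! = 0` for `1 ≤ k ≤ q`,
and `1/q! - q/(q+1)! = 1/(q+1)!` for `k = q + 1`.
-/

open Finset Set Nat Metric

theorem sum_Icc_one_eq_sum_range_succ {M : Type*} [AddCommMonoid M] (f : ℕ → M) (n : ℕ) :
    ∑ k ∈ Icc 1 n, f k = ∑ k ∈ range n, f (k + 1) := by
  rw [← Finset.Ico_add_one_right_eq_Icc, range_eq_Ico, sum_Ico_add' f 0 n 1, zero_add]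

theorem taylorWithinEval_eq_sum_iteratedDeriv {f : ℝ → ℝ} {n : ℕ} {s : Set ℝ} {x₀ x : ℝ}
    (hs : UniqueDiffOn ℝ s) (hf : ContDiffAt ℝ n f x₀) (hx₀ : x₀ ∈ s) :
    taylorWithinEval f n s x₀ x =
      ∑ k ∈ range (n + 1), iteratedDeriv k f x₀ * (x - x₀) ^ k / k ! := by
  rw [taylor_within_apply]
  refine sum_congr rfl fun k hk => ?_
  have hkn : (k : WithTop ℕ∞) ≤ n := by exact_mod_cast Nat.lt_succ_iff.mp (mem_range.mp hk)
  rw [iteratedDerivWithin_eq_iteratedDeriv hs (hf.of_le hkn) hx₀, smul_eq_mul]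
  ring

theorem abs_sub_sum_iteratedDeriv_le {f : ℝ → ℝ} {n : ℕ} {s : Set ℝ} {M y w : ℝ}
    (hf : ContDiffOn ℝ (n + 1) f s) (hs : IsOpen s) (hyw : y ≠ w) (hsub : uIcc y w ⊆ s)
    (hM : ∀ x ∈ uIcc y w, |iteratedDeriv (n + 1) f x| ≤ M) :
    |f w - ∑ k ∈ range (n + 1), iteratedDeriv k f y * (w - y) ^ k / k !|
      ≤ M * |w - y| ^ (n + 1) / (n + 1)! := by
  obtain ⟨x, hx, hfx⟩ := taylor_mean_remainder_lagrange_iteratedDeriv hyw (hf.mono hsub)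
  have hfy : ContDiffAt ℝ n f y :=
    (hf.contDiffAt (hs.mem_nhds (hsub left_mem_uIcc))).of_le (by norm_cast; omega)
  rw [← taylorWithinEval_eq_sum_iteratedDeriv (uniqueDiffOn_uIcc hyw) hfy left_mem_uIcc, hfx,
    abs_div, abs_mul, abs_pow, Nat.abs_cast]
  gcongr
  exact hM x (Ioo_subset_Icc_self hx)

theorem ContDiffOn.exists_abs_iteratedDeriv_le {f : ℝ → ℝ} {n : ℕ} {s K : Set ℝ}
    (hf : ContDiffOn ℝ n f s) (hs : IsOpen s) (hK : IsCompact K) (hKs : K ⊆ s) :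
    ∃ M, ∀ x ∈ K, |iteratedDeriv n f x| ≤ M := by
  have hcont : ContinuousOn (iteratedDeriv n f) s :=
    (hf.continuousOn_iteratedDerivWithin le_rfl hs.uniqueDiffOn).congr
      (iteratedDerivWithin_of_isOpen hs).symm
  exact hK.exists_bound_of_continuousOn (hcont.mono hKs)

/-- The `g'_q` of the statement. -/
noncomputable def approxDeriv (q : ℕ) (g : ℝ → ℝ) (y w : ℝ) : ℝ :=
  q * (g w - g y) / (w - y) +
    ∑ k ∈ Icc 1 (q - 1), (((k : ℝ) - q) / k !) * iteratedDeriv k g y * (w - y) ^ (k - 1)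

theorem remainder_identity (q : ℕ) (c : ℕ → ℝ) {t : ℝ} (ht : t ≠ 0) :
    (q : ℝ) * ((∑ k ∈ range (q + 2), c k * t ^ k / k !) - c 0) / t
      + ∑ k ∈ Icc 1 (q - 1), (((k : ℝ) - q) / k !) * c k * t ^ (k - 1)
      + c (q + 1) / (q + 1)! * t ^ q
    = ∑ k ∈ range (q + 1), c (k + 1) * t ^ k / k ! := by
  have hshift : (q : ℝ) * ((∑ k ∈ range (q + 2), c k * t ^ k / k !) - c 0) / t
      = ∑ k ∈ range (q + 1), q / (k + 1)! * c (k + 1) * t ^ k := by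
    rw [sum_range_succ', pow_zero, factorial_zero, cast_one, div_one, mul_one,
      add_sub_cancel_right, mul_sum, sum_div]
    refine sum_congr rfl fun k _ => ?_
    field_simp
    ring
  -- the coefficient `k - q` vanishes at `k = q` and equals `1` at `k = q + 1`
  have hextend : ∑ k ∈ Icc 1 (q - 1), (((k : ℝ) - q) / k !) * c k * t ^ (k - 1)
        + c (q + 1) / (q + 1)! * t ^ q
      = ∑ k ∈ range (q + 1), (((k + 1 : ℕ) : ℝ) - q) / (k + 1)! * c (k + 1) * t ^ k := by
    rw [sum_subset (Icc_subset_Icc_right (Nat.sub_le q 1)), sum_Icc_one_eq_sum_range_succ,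
      sum_range_succ]
    · congr 1
      push_cast
      ring
    · intro k hk hk'
      obtain rfl : k = q := by simp only [Finset.mem_Icc] at hk hk'; omega
      rw [sub_self, zero_div, zero_mul, zero_mul]
  rw [hshift, add_assoc, hextend, ← sum_add_distrib]
  refine sum_congr rfl fun k _ => ?_
  rw [factorial_succ]
  push_cast
  field_simp
  ring

theorem deriv_sub_approxDeriv_sub_eq {q : ℕ} (g : ℝ → ℝ) {y w : ℝ} (h : w - y ≠ 0) :
    deriv g w - approxDeriv q g y w - iteratedDeriv (q + 1) g y / (q + 1)! * (w - y) ^ q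
      = (deriv g w - ∑ k ∈ range (q + 1), iteratedDeriv (k + 1) g y * (w - y) ^ k / k !)
        - q * (g w - ∑ k ∈ range (q + 2), iteratedDeriv k g y * (w - y) ^ k / k !) / (w - y) := by
  have hid := remainder_identity q (fun k => iteratedDeriv k g y) h
  rw [iteratedDeriv_zero] at hid
  rw [approxDeriv]
  linear_combination -hid

theorem abs_deriv_sub_approxDeriv_sub_le {g : ℝ → ℝ} {q : ℕ} {s : Set ℝ} {M y w : ℝ}
    (hg : ContDiffOn ℝ (q + 2) g s) (hs : IsOpen s) (hyw : y ≠ w) (hsub : uIcc y w ⊆ s)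
    (hM : ∀ x ∈ uIcc y w, |iteratedDeriv (q + 2) g x| ≤ M) :
    |deriv g w - approxDeriv q g y w - iteratedDeriv (q + 1) g y / (q + 1)! * (w - y) ^ q|
      ≤ 2 * M * |w - y| ^ (q + 1) := by
  have hderiv : |deriv g w - ∑ k ∈ range (q + 1), iteratedDeriv (k + 1) g y * (w - y) ^ k / k !|
      ≤ M * |w - y| ^ (q + 1) / (q + 1)! := by
    simp_rw [iteratedDeriv_succ']
    refine abs_sub_sum_iteratedDeriv_le (hg.deriv_of_isOpen hs ?_) hs hyw hsub ?_
    · rw [add_assoc]; norm_num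
    · simpa only [← iteratedDeriv_succ'] using hM
  have hfun : |g w - ∑ k ∈ range (q + 2), iteratedDeriv k g y * (w - y) ^ k / k !|
      ≤ M * |w - y| ^ (q + 2) / (q + 2)! :=
    abs_sub_sum_iteratedDeriv_le (n := q + 1) hg hs hyw hsub hM
  have hM0 : 0 ≤ M := (abs_nonneg _).trans (hM y left_mem_uIcc)
  have hcoeff : (1 : ℝ) / (q + 1)! + q / (q + 2)! ≤ 2 := by
    have h1 : (1 : ℝ) / (q + 1)! ≤ 1 :=
      div_le_one_of_le₀ (by exact_mod_cast (q + 1).factorial_pos) (by positivity)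
    have h2 : (q : ℝ) / (q + 2)! ≤ 1 :=
      div_le_one_of_le₀ (by exact_mod_cast (q.le_add_right 2).trans (q + 2).self_le_factorial)
        (by positivity)
    linarith
  rw [deriv_sub_approxDeriv_sub_eq g (sub_ne_zero.2 hyw.symm)]
  calc _ ≤ |deriv g w - ∑ k ∈ range (q + 1), iteratedDeriv (k + 1) g y * (w - y) ^ k / k !|
        + q * |g w - ∑ k ∈ range (q + 2), iteratedDeriv k g y * (w - y) ^ k / k !| / |w - y| := by
        refine (abs_sub _ _).trans_eq ?_
        rw [abs_div, abs_mul, Nat.abs_cast]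
    _ ≤ M * |w - y| ^ (q + 1) / (q + 1)! + q * (M * |w - y| ^ (q + 2) / (q + 2)!) / |w - y| := by
        gcongr
    _ = (1 / (q + 1)! + q / (q + 2)!) * (M * |w - y| ^ (q + 1)) := by
        field_simp
        ring
    _ ≤ 2 * M * |w - y| ^ (q + 1) := by
        rw [mul_assoc]
        gcongr

theorem remainder_asymptotic_general (q : ℕ) (g : ℝ → ℝ)
    (hg : ∃ ε > 0, ContDiffOn ℝ (q + 2) g (Metric.ball (0 : ℝ) ε)) :
    ∃ C > 0, ∃ δ > 0, ∀ y w : ℝ, |y| < δ → |w| < δ → y ≠ w →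
      |(deriv g w -
          (q * (g w - g y) / (w - y) +
            ∑ k ∈ Finset.Icc 1 (q - 1),
              (((k : ℝ) - q) / (Nat.factorial k)) * iteratedDeriv k g y * (w - y) ^ (k - 1)))
        - (iteratedDeriv (q + 1) g y / (Nat.factorial (q + 1))) * (w - y) ^ q|
        ≤ C * |w - y| ^ (q + 1) := by
  obtain ⟨ε, hε, hg⟩ := hg
  have hball : closedBall (0 : ℝ) (ε / 2) ⊆ ball 0 ε := closedBall_subset_ball (half_lt_self hε)
  obtain ⟨M, hM⟩ := ContDiffOn.exists_abs_iteratedDeriv_le (n := q + 2) (by exact_mod_cast hg)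
    isOpen_ball (isCompact_closedBall 0 _) hball
  have hM0 : 0 ≤ M := (abs_nonneg _).trans (hM 0 (mem_closedBall_self (by positivity)))
  refine ⟨2 * M + 1, by positivity, ε / 2, half_pos hε, fun y w hy hw hyw => ?_⟩
  have hsub : uIcc y w ⊆ closedBall 0 (ε / 2) :=
    (convex_closedBall 0 _).ordConnected.uIcc_subset (by simpa using hy.le) (by simpa using hw.le)
  calc _ ≤ 2 * M * |w - y| ^ (q + 1) :=
        abs_deriv_sub_approxDeriv_sub_le hg isOpen_ball hyw (hsub.trans hball)
          fun x hx => hM x (hsub hx)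
    _ ≤ (2 * M + 1) * |w - y| ^ (q + 1) := by gcongr; linarith

theorem remainder_asymptotic (q : ℕ) (hq : 2 ≤ q) (g : ℝ → ℝ)
    (hg : ∃ ε > 0, ContDiffOn ℝ (q + 2) g (Metric.ball (0 : ℝ) ε)) :
    ∃ C > 0, ∃ δ > 0, ∀ y w : ℝ, |y| < δ → |w| < δ → y ≠ w →
      |(deriv g w -
          (q * (g w - g y) / (w - y) +
            ∑ k ∈ Finset.Icc 1 (q - 1),
              (((k : ℝ) - q) / (Nat.factorial k)) * iteratedDeriv k g y * (w - y) ^ (k - 1)))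
        - (iteratedDeriv (q + 1) g y / (Nat.factorial (q + 1))) * (w - y) ^ q|
        ≤ C * |w - y| ^ (q + 1) :=
  remainder_asymptotic_general q g hg
end

section
/- Let f be real-analytic near a simple root α (f(α)=0, f'(α)≠0). For x near α define the composed Newton iteration ψ(x) = z - ((f(x)+f(z))/(f(x)-f(z)))·(f(z)/f'(x)), where z = x - f(x)/f'(x). Then with e = x - α and A_k = f^{(k)}(α)/(k! f'(α)), one has ψ(x) - α = A₂(3A₂² - A₃)·e⁴ + O(e⁵) as x → α. -/
/-!
Put `e = x - α` and `g(e) = f(α + e) / f'(α)`; the composed step commutes with this affine change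
of variables. Taylor's theorem gives `g = e + A₂e² + A₃e³ + A₄e⁴ + O(e⁵)` and
`g' = 1 + 2A₂e + 3A₃e² + 4A₄e³ + O(e⁴)`, hence the Newton step `w = A₂e² + O(e³)` is a polynomial
in `e` up to `O(e⁵)`, and so is `g(w) = w + A₂w² + O(e⁶)`. Clearing denominators, `ψ - α = N / D`
with `N = (e g' - g)(g - g(w)) - (g + g(w)) g(w)` and `D = (g - g(w)) g' = e + O(e²)`. In `N` the
terms of order `e³` and `e⁴` cancel, leaving `N = A₂(3A₂² - A₃) e⁵ + O(e⁶)`; dividing by `D ~ e`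
gives the claim.
-/

open Filter Asymptotics Topology

section PowerOrder

variable {𝕜 : Type*} [NormedField 𝕜]

theorem isBigO_pow_pow_of_le {m n : ℕ} (h : m ≤ n) :
    (fun x : 𝕜 => x ^ n) =O[𝓝 0] fun x => x ^ m :=
  h.eq_or_lt.elim (fun h => h ▸ isBigO_refl _ _) fun h => (isLittleO_pow_pow h).isBigO

theorem ContinuousAt.isBigO_pow_mul {r : 𝕜 → 𝕜} (hr : ContinuousAt r 0) (n : ℕ) :
    (fun x => x ^ n * r x) =O[𝓝 0] fun x => x ^ n :=
  ((isBigO_refl (fun x : 𝕜 => x ^ n) _).mul (hr.isBigO_one 𝕜)).congr_right fun _ => mul_one _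

theorem ContinuousAt.isBigO_pow_zero {r : 𝕜 → 𝕜} (hr : ContinuousAt r 0) :
    r =O[𝓝 0] fun x => x ^ 0 :=
  (hr.isBigO_pow_mul 0).congr_left fun x => by ring

theorem isBigO_pow_of_eq_pow_mul {g : 𝕜 → 𝕜} (n : ℕ) (r : 𝕜 → 𝕜)
    (hr : ContinuousAt r 0) (h : ∀ x, g x = x ^ n * r x) : g =O[𝓝 0] fun x => x ^ n :=
  (hr.isBigO_pow_mul n).congr_left fun x => (h x).symm

theorem Asymptotics.IsBigO.mul_pow_pow {l : Filter 𝕜} {f g : 𝕜 → 𝕜} {m n : ℕ}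
    (hf : f =O[l] fun x => x ^ m) (hg : g =O[l] fun x => x ^ n) :
    (fun x => f x * g x) =O[l] fun x => x ^ (m + n) :=
  (hf.mul hg).congr_right fun x => (pow_add x m n).symm

theorem Asymptotics.IsBigO.sub_pow_trans {f p q : 𝕜 → 𝕜} {m n : ℕ}
    (hf : (fun x => f x - p x) =O[𝓝 0] fun x => x ^ n)
    (hpq : (fun x => p x - q x) =O[𝓝 0] fun x => x ^ m) (hmn : m ≤ n) :
    (fun x => f x - q x) =O[𝓝 0] fun x => x ^ m :=
  ((hf.trans (isBigO_pow_pow_of_le hmn)).add hpq).congr_left fun x => by ring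

theorem Asymptotics.IsBigO.of_sub_pow {f p : 𝕜 → 𝕜} {m n : ℕ}
    (hf : (fun x => f x - p x) =O[𝓝 0] fun x => x ^ n)
    (hp : p =O[𝓝 0] fun x => x ^ m) (hmn : m ≤ n) :
    f =O[𝓝 0] fun x => x ^ m :=
  ((hf.trans (isBigO_pow_pow_of_le hmn)).add hp).congr_left fun x => by ring

theorem Asymptotics.IsBigO.tendsto_zero_of_pow {f : 𝕜 → 𝕜} {n : ℕ}
    (hf : f =O[𝓝 0] fun x => x ^ n) (hn : n ≠ 0) : Tendsto f (𝓝 0) (𝓝 0) :=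
  hf.trans_tendsto ((continuous_pow n).tendsto' 0 0 (zero_pow hn))

theorem Asymptotics.IsBigO.div_of_isBigO_id {l : Filter 𝕜} {N D : 𝕜 → 𝕜} {n : ℕ}
    (hN : N =O[l] fun x => x ^ (n + 1)) (hD : (fun x => x) =O[l] D)
    (h0 : ∀ᶠ x in l, x ≠ 0) :
    (fun x => N x / D x) =O[l] fun x => x ^ n := by
  have hinv : (fun x => (D x)⁻¹) =O[l] fun x => x⁻¹ :=
    hD.inv_rev (h0.mono fun x hx h => absurd h hx)
  refine (hN.mul hinv).congr' (Eventually.of_forall fun x => (div_eq_mul_inv _ _).symm) ?_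
  filter_upwards [h0] with x hx
  rw [pow_succ, mul_inv_cancel_right₀ hx]

end PowerOrder

theorem Asymptotics.IsBigO.exists_pos_bound_of_nhdsNE {g : ℝ → ℝ} {n : ℕ}
    (h : g =O[𝓝[≠] 0] fun x => x ^ n) :
    ∃ C > 0, ∃ δ > 0, ∀ x, 0 < |x| → |x| < δ → |g x| ≤ C * |x| ^ n := by
  obtain ⟨C, hC, hCg⟩ := h.exists_pos
  obtain ⟨δ, hδ, hball⟩ := Metric.eventually_nhds_iff.1 (eventually_nhdsWithin_iff.1 hCg.bound)
  refine ⟨C, hC, δ, hδ, fun x hx hxδ => ?_⟩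
  simpa [abs_pow] using hball (by simpa using hxδ) (abs_pos.1 hx)

theorem AnalyticAt.isBigO_sub_taylor {f : ℝ → ℝ} {x₀ : ℝ} (hf : AnalyticAt ℝ f x₀) (n : ℕ) :
    (fun t => f (x₀ + t) - ∑ k ∈ Finset.range n, iteratedDeriv k f x₀ / k.factorial * t ^ k)
      =O[𝓝 0] fun t => t ^ n := by
  obtain ⟨r, hr, han⟩ := hf.exists_ball_analyticOnNhd
  have hx₀ : x₀ ∈ Metric.ball x₀ r := Metric.mem_ball_self hr
  have htaylor := taylor_isLittleO (convex_ball x₀ r) hx₀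
    (han.contDiffOn_of_completeSpace (n := n))
  rw [nhdsWithin_eq_nhds.2 (Metric.isOpen_ball.mem_nhds hx₀)] at htaylor
  have hlast : (fun x => iteratedDeriv n f x₀ / n.factorial * (x - x₀) ^ n)
      =O[𝓝 x₀] fun x => (x - x₀) ^ n := (isBigO_refl _ _).const_mul_left _
  have htendsto : Tendsto (fun t : ℝ => x₀ + t) (𝓝 0) (𝓝 x₀) := by
    simpa using (continuous_const_add x₀).tendsto 0
  refine ((htaylor.isBigO.add hlast).comp_tendsto htendsto).congr (fun t => ?_) fun t => ?_
  · have hterm (k : ℕ) : ((k.factorial : ℝ)⁻¹ * t ^ k) * iteratedDeriv k f x₀ =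
        iteratedDeriv k f x₀ / k.factorial * t ^ k := by ring
    simp only [Function.comp_apply, taylor_within_apply, Finset.sum_range_succ,
      add_sub_cancel_left, iteratedDerivWithin_of_isOpen Metric.isOpen_ball hx₀, smul_eq_mul, hterm]
    ring
  · simp

section Newton

variable {𝕜 : Type*} [Field 𝕜]

def newtonStep (g g' : 𝕜 → 𝕜) (x : 𝕜) : 𝕜 := x - g x / g' x

def composedNewton (g g' : 𝕜 → 𝕜) (x : 𝕜) : 𝕜 :=
  newtonStep g g' x - (g x + g (newtonStep g g' x)) / (g x - g (newtonStep g g' x)) *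
    (g (newtonStep g g' x) / g' x)

theorem newtonStep_comp_add_div {g g' : 𝕜 → 𝕜} {c : 𝕜} (hc : c ≠ 0) (x₀ t : 𝕜) :
    newtonStep (fun t => g (x₀ + t) / c) (fun t => g' (x₀ + t) / c) t =
      newtonStep g g' (x₀ + t) - x₀ := by
  simp only [newtonStep, div_div_div_cancel_right₀ hc]
  ring

theorem composedNewton_comp_add_div {g g' : 𝕜 → 𝕜} {c : 𝕜} (hc : c ≠ 0) (x₀ t : 𝕜) :
    composedNewton (fun t => g (x₀ + t) / c) (fun t => g' (x₀ + t) / c) t =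
      composedNewton g g' (x₀ + t) - x₀ := by
  simp only [composedNewton, newtonStep_comp_add_div hc, add_sub_cancel, ← add_div, ← sub_div,
    div_div_div_cancel_right₀ hc]
  ring

end Newton

section NewtonAsymptotics

variable {𝕜 : Type*} [NormedField 𝕜] {g g' : 𝕜 → 𝕜} {a b d : 𝕜}

local notation "β" => 2 * b - 2 * a ^ 2
local notation "γ" => 4 * a ^ 3 - 7 * a * b + 3 * d

theorem newtonStep_sub_isBigO
    (hg : (fun e => g e - (e + a * e ^ 2 + b * e ^ 3 + d * e ^ 4)) =O[𝓝 0] fun e => e ^ 5)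
    (hg' : (fun e => g' e - (1 + 2 * a * e + 3 * b * e ^ 2 + 4 * d * e ^ 3)) =O[𝓝 0]
      fun e => e ^ 4) :
    (fun e => newtonStep g g' e - (a * e ^ 2 + β * e ^ 3 + γ * e ^ 4)) =O[𝓝 0] fun e => e ^ 5 := by
  have hg'1 : (fun e => g' e - 1) =O[𝓝 0] fun e => e ^ 1 :=
    hg'.sub_pow_trans (isBigO_pow_of_eq_pow_mul 1 (fun e => 2 * a + 3 * b * e + 4 * d * e ^ 2)
      (by fun_prop) fun e => by ring) (by norm_num)
  have hlim : Tendsto g' (𝓝 0) (𝓝 1) := by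
    simpa using (hg'1.tendsto_zero_of_pow one_ne_zero).add_const 1
  have hinv : (fun e => (g' e)⁻¹) =O[𝓝 0] fun e => e ^ 0 := by
    simpa using (hlim.inv₀ one_ne_zero).isBigO_one 𝕜
  have hW : (fun e => e - (a * e ^ 2 + β * e ^ 3 + γ * e ^ 4)) =O[𝓝 0] fun e => e ^ 1 :=
    isBigO_pow_of_eq_pow_mul 1 (fun e => 1 - a * e - β * e ^ 2 - γ * e ^ 3) (by fun_prop)
      fun e => by ring
  -- `W = a e² + β e³ + γ e⁴` is `(e F' - F) / F'` truncated at degree 4 (`F`, `F'` the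
  -- polynomials in `hg`, `hg'`), so `(e - W) F' - F = -e⁵ R` with the `R` below.
  have hnum : (fun e => (e - (a * e ^ 2 + β * e ^ 3 + γ * e ^ 4)) *
        (g' e - (1 + 2 * a * e + 3 * b * e ^ 2 + 4 * d * e ^ 3)) -
        (g e - (e + a * e ^ 2 + b * e ^ 3 + d * e ^ 4)) -
        e ^ 5 * (4 * a * d + β * (3 * b + 4 * d * e) + γ * (2 * a + 3 * b * e + 4 * d * e ^ 2)))
      =O[𝓝 0] fun e => e ^ 5 :=
    ((hW.mul_pow_pow hg').sub hg).sub (ContinuousAt.isBigO_pow_mul (by fun_prop) 5)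
  refine (hnum.mul_pow_pow hinv).congr' ?_ EventuallyEq.rfl
  filter_upwards [hlim.eventually_ne one_ne_zero] with e he
  simp only [newtonStep]
  field_simp
  ring

theorem apply_newtonStep_sub_isBigO
    (hg : (fun e => g e - (e + a * e ^ 2 + b * e ^ 3 + d * e ^ 4)) =O[𝓝 0] fun e => e ^ 5)
    (hg' : (fun e => g' e - (1 + 2 * a * e + 3 * b * e ^ 2 + 4 * d * e ^ 3)) =O[𝓝 0]
      fun e => e ^ 4) :
    (fun e => g (newtonStep g g' e) - (a * e ^ 2 + β * e ^ 3 + (γ + a ^ 3) * e ^ 4))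
      =O[𝓝 0] fun e => e ^ 5 := by
  set w := newtonStep g g'
  have hw := newtonStep_sub_isBigO hg hg'
  have hW : (fun e => a * e ^ 2 + β * e ^ 3 + γ * e ^ 4) =O[𝓝 0] fun e => e ^ 2 :=
    isBigO_pow_of_eq_pow_mul 2 (fun e => a + β * e + γ * e ^ 2) (by fun_prop) fun e => by ring
  have hw2 : w =O[𝓝 0] fun e => e ^ 2 := hw.of_sub_pow hW (by norm_num)
  have hg3 : (fun y => g y - (y + a * y ^ 2)) =O[𝓝 0] fun y => y ^ 3 :=
    hg.sub_pow_trans (isBigO_pow_of_eq_pow_mul 3 (fun y => b + d * y) (by fun_prop)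
      fun y => by ring) (by norm_num)
  have hgw : (fun e => g (w e) - (w e + a * w e ^ 2)) =O[𝓝 0] fun e => e ^ 5 :=
    (hg3.comp_tendsto (hw2.tendsto_zero_of_pow two_ne_zero)).trans <| (hw2.pow 3).trans <|
      isBigO_pow_of_eq_pow_mul 5 (fun e => e) (by fun_prop) fun e => by ring
  have hsq : (fun e => (w e - (a * e ^ 2 + β * e ^ 3 + γ * e ^ 4)) *
      (w e + (a * e ^ 2 + β * e ^ 3 + γ * e ^ 4))) =O[𝓝 0] fun e => e ^ 5 :=
    hw.mul_pow_pow ((hw2.add hW).trans (isBigO_pow_pow_of_le (Nat.zero_le 2)))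
  have hW2 : (fun e => (a * e ^ 2 + β * e ^ 3 + γ * e ^ 4) ^ 2 - a ^ 2 * e ^ 4)
      =O[𝓝 0] fun e => e ^ 5 :=
    isBigO_pow_of_eq_pow_mul 5 (fun e => (β + γ * e) * (2 * a + β * e + γ * e ^ 2))
      (by fun_prop) fun e => by ring
  refine (((hgw.add hw).add (hsq.const_mul_left a)).add (hW2.const_mul_left a)).congr_left
    fun e => ?_
  ring

theorem composedNewton_sub_isBigO
    (hg : (fun e => g e - (e + a * e ^ 2 + b * e ^ 3 + d * e ^ 4)) =O[𝓝 0] fun e => e ^ 5)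
    (hg' : (fun e => g' e - (1 + 2 * a * e + 3 * b * e ^ 2 + 4 * d * e ^ 3)) =O[𝓝 0]
      fun e => e ^ 4) :
    (fun e => composedNewton g g' e - a * (3 * a ^ 2 - b) * e ^ 4) =O[𝓝[≠] 0] fun e => e ^ 5 := by
  set v := fun e => g (newtonStep g g' e) with hv_def
  set D := fun e => (g e - v e) * g' e with hD_def
  set N := fun e => (e * g' e - g e) * (g e - v e) - (g e + v e) * v e with hN_def
  have hv := apply_newtonStep_sub_isBigO hg hg'
  have hid : (fun e : 𝕜 => e) =O[𝓝 0] fun e => e ^ 1 :=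
    (isBigO_refl _ _).congr_right fun e => (pow_one e).symm
  have hv2 : v =O[𝓝 0] fun e => e ^ 2 := hv.of_sub_pow (isBigO_pow_of_eq_pow_mul 2
    (fun e => a + β * e + (γ + a ^ 3) * e ^ 2) (by fun_prop) fun e => by ring) (by norm_num)
  have hg1 : g =O[𝓝 0] fun e => e ^ 1 := hg.of_sub_pow (isBigO_pow_of_eq_pow_mul 1
    (fun e => 1 + a * e + b * e ^ 2 + d * e ^ 3) (by fun_prop) fun e => by ring) (by norm_num)
  have hge : (fun e => g e - e) =O[𝓝 0] fun e => e ^ 2 := hg.sub_pow_trans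
    (isBigO_pow_of_eq_pow_mul 2 (fun e => a + b * e + d * e ^ 2) (by fun_prop) fun e => by ring)
    (by norm_num)
  have hg'0 : g' =O[𝓝 0] fun e => e ^ 0 :=
    hg'.of_sub_pow (ContinuousAt.isBigO_pow_zero (by fun_prop)) (by norm_num)
  have hg'1 : (fun e => g' e - 1) =O[𝓝 0] fun e => e ^ 1 := hg'.sub_pow_trans
    (isBigO_pow_of_eq_pow_mul 1 (fun e => 2 * a + 3 * b * e + 4 * d * e ^ 2) (by fun_prop)
      fun e => by ring) (by norm_num)
  have hD : (fun e => D e - e) =O[𝓝 0] fun e => e ^ 2 :=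
    (((hge.sub hv2).mul_pow_pow hg'0).add (hid.mul_pow_pow hg'1)).congr_left fun e => by ring
  have hN : (fun e => N e - a * (3 * a ^ 2 - b) * e ^ 4 * D e) =O[𝓝 0] fun e => e ^ 6 := by
    have hG : (fun e => a * e ^ 2 + 2 * b * e ^ 3 + 3 * d * e ^ 4) =O[𝓝 0] fun e => e ^ 1 :=
      isBigO_pow_of_eq_pow_mul 1 (fun e => a * e + 2 * b * e ^ 2 + 3 * d * e ^ 3) (by fun_prop)
        fun e => by ring
    have hFQ : (fun e => (e + a * e ^ 2 + b * e ^ 3 + d * e ^ 4) +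
        (a * e ^ 2 + β * e ^ 3 + (γ + a ^ 3) * e ^ 4)) =O[𝓝 0] fun e => e ^ 1 :=
      isBigO_pow_of_eq_pow_mul 1 (fun e => 1 + 2 * a * e + (b + β) * e ^ 2 +
        (d + γ + a ^ 3) * e ^ 3) (by fun_prop) fun e => by ring
    -- Let `F`, `G = e F' - F`, `Q` be the polynomials approximating `g`, `e g' - g`, `v`. With
    -- `F - Q = e + e³ρ`, `G - Q = e³τ` and `Q = a e² + e³σ`, the polynomial part of `N` is
    -- `(e + e³ρ) e³τ - 2Q² = a (3a² - b) e⁵ + e⁶ (ρτ - 2σ² - 4a(γ + a³))`.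
    have hR : (fun e => e ^ 6 * (((b - β) + (d - γ - a ^ 3) * e) *
        ((2 * b - β) + (3 * d - γ - a ^ 3) * e) - 2 * (β + (γ + a ^ 3) * e) ^ 2 -
        4 * a * (γ + a ^ 3))) =O[𝓝 0] fun e => e ^ 6 :=
      ContinuousAt.isBigO_pow_mul (by fun_prop) 6
    have h1 := ((hid.mul_pow_pow hg').sub hg).mul_pow_pow
      (hg1.sub (hv2.trans (isBigO_pow_pow_of_le one_le_two)))
    have h2 := hG.mul_pow_pow (hg.sub hv)
    have h3 := (hv2.mul_pow_pow (hg.add hv)).trans (isBigO_pow_pow_of_le (by norm_num : 6 ≤ 7))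
    have h4 := hFQ.mul_pow_pow hv
    have h5 := ((isBigO_refl (fun e : 𝕜 => e ^ 4) _).mul_pow_pow hD).const_mul_left
      (a * (3 * a ^ 2 - b))
    refine ((((hR.add h1).add h2).sub h3).sub h4 |>.sub h5).congr_left fun e => ?_
    simp only [hN_def, hD_def]
    ring
  have hDen : (fun e => e) =O[𝓝 0] D :=
    IsEquivalent.isBigO_symm (hD.trans_isLittleO ((isLittleO_pow_pow one_lt_two).congr_right
      fun e => pow_one e))
  have hD0 : ∀ᶠ e in 𝓝[≠] 0, D e ≠ 0 := by
    filter_upwards [nhdsWithin_le_nhds hDen.eq_zero_imp, self_mem_nhdsWithin] with e h0 he hDe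
    exact he (h0 hDe)
  refine ((hN.mono nhdsWithin_le_nhds).div_of_isBigO_id (hDen.mono nhdsWithin_le_nhds)
    self_mem_nhdsWithin).congr' ?_ EventuallyEq.rfl
  filter_upwards [hD0] with e he
  simp only [composedNewton, hN_def, hD_def, hv_def] at he ⊢
  generalize g (newtonStep g g' e) = y at he ⊢
  have hg'e : g' e ≠ 0 := right_ne_zero_of_mul he
  have hgy : g e - y ≠ 0 := left_ne_zero_of_mul he
  simp only [newtonStep]
  field_simp

end NewtonAsymptotics

theorem composed_newton_error_general (f : ℝ → ℝ) (α : ℝ)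
    (hf : AnalyticAt ℝ f α) (hroot : f α = 0) (hf' : deriv f α ≠ 0)
    (z ψ : ℝ → ℝ)
    (hz : ∀ x, z x = x - f x / deriv f x)
    (hψ : ∀ x, ψ x = z x - ((f x + f (z x)) / (f x - f (z x))) * (f (z x) / deriv f x)) :
    ∃ C > 0, ∃ δ > 0, ∀ x : ℝ, 0 < |x - α| → |x - α| < δ →
      |ψ x - α -
        (iteratedDeriv 2 f α / (2 * deriv f α)) *
          (3 * (iteratedDeriv 2 f α / (2 * deriv f α)) ^ 2
            - iteratedDeriv 3 f α / (6 * deriv f α)) * (x - α) ^ 4|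
        ≤ C * |x - α| ^ 5 := by
  have hg : (fun e => f (α + e) / deriv f α - (e + iteratedDeriv 2 f α / (2 * deriv f α) * e ^ 2 +
      iteratedDeriv 3 f α / (6 * deriv f α) * e ^ 3 +
      iteratedDeriv 4 f α / (24 * deriv f α) * e ^ 4)) =O[𝓝 0] fun e => e ^ 5 := by
    refine ((hf.isBigO_sub_taylor 5).const_mul_left (deriv f α)⁻¹).congr_left fun e => ?_
    simp only [Finset.sum_range_succ, Finset.sum_range_zero, iteratedDeriv_zero,
      iteratedDeriv_one, hroot, Nat.factorial]
    field_simp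
    ring
  have hg' : (fun e => deriv f (α + e) / deriv f α - (1 +
      2 * (iteratedDeriv 2 f α / (2 * deriv f α)) * e +
      3 * (iteratedDeriv 3 f α / (6 * deriv f α)) * e ^ 2 +
      4 * (iteratedDeriv 4 f α / (24 * deriv f α)) * e ^ 3)) =O[𝓝 0] fun e => e ^ 4 := by
    refine ((hf.deriv.isBigO_sub_taylor 4).const_mul_left (deriv f α)⁻¹).congr_left fun e => ?_
    simp only [Finset.sum_range_succ, Finset.sum_range_zero, ← iteratedDeriv_succ', zero_add,
      iteratedDeriv_one, Nat.factorial]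
    field_simp
    ring
  obtain ⟨C, hC, δ, hδ, hbound⟩ := (composedNewton_sub_isBigO hg hg').exists_pos_bound_of_nhdsNE
  refine ⟨C, hC, δ, hδ, fun x hx hxδ => ?_⟩
  have hψx : ψ x = composedNewton f (deriv f) (α + (x - α)) := by
    rw [add_sub_cancel, hψ, hz]; rfl
  simpa [hψx, composedNewton_comp_add_div hf'] using hbound (x - α) hx hxδ

theorem composed_newton_error (f : ℝ → ℝ) (α : ℝ)
    (hf : AnalyticAt ℝ f α) (hroot : f α = 0) (hf' : deriv f α ≠ 0)
    (z ψ : ℝ → ℝ)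
    (hz : ∀ x, z x = x - f x / deriv f x)
    (hψ : ∀ x, ψ x = z x - ((f x + f (z x)) / (f x - f (z x))) * (f (z x) / deriv f x))
    (hreg : ∀ᶠ x in nhdsWithin α {α}ᶜ, deriv f x ≠ 0 ∧ f x ≠ f (z x)) :
    ∃ C > 0, ∃ δ > 0, ∀ x : ℝ, 0 < |x - α| → |x - α| < δ →
      |ψ x - α -
        (iteratedDeriv 2 f α / (2 * deriv f α)) *
          (3 * (iteratedDeriv 2 f α / (2 * deriv f α)) ^ 2
            - iteratedDeriv 3 f α / (6 * deriv f α)) * (x - α) ^ 4|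
        ≤ C * |x - α| ^ 5 :=
  composed_newton_error_general f α hf hroot hf' z ψ hz hψ
end

section
/- Let f be real-analytic near a simple root α. The Schröder iteration z(x) = x - (1 + L(x)/2 - M(x)u(x)²/6)·u(x), with u(x)=f(x)/f'(x), L(x)=f''(x)u(x)/f'(x), and M(x)=f'''(x)/f'(x) - 3(f''(x)/f'(x))², satisfies z(x) - α = (5A₂³ - 5A₂A₃ + A₄)·(x-α)⁴ + O((x-α)⁵), where A_k = f^{(k)}(α)/(k! f'(α)). -/
set_option maxHeartbeats 1000000

open Filter Asymptotics

private noncomputable def Gc0 (c1 c2 c3 c4 : ℝ) : ℝ :=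
  (-216)*c1^4*c2^4 + 384*c1^5*c2^2*c3 + (-72)*c1^6*c3^2 + (-120)*c1^6*c2*c4

private noncomputable def Gc1 (c1 c2 c3 c4 : ℝ) : ℝ :=
  (-1140)*c1^3*c2^5 + 1260*c1^4*c2^3*c3 + 480*c1^5*c2*c3^2 + (-204)*c1^5*c2^2*c4 + (-396)*c1^6*c3*c4

private noncomputable def Gc2 (c1 c2 c3 c4 : ℝ) : ℝ :=
  (-2400)*c1^2*c2^6 + (-720)*c1^3*c2^4*c3 + 4800*c1^4*c2^2*c3^2 + (-456)*c1^4*c2^3*c4 + (-408)*c1^5*c2*c3*c4 + (-456)*c1^6*c4^2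

private noncomputable def Gc3 (c1 c2 c3 c4 : ℝ) : ℝ :=
  (-2400)*c1*c2^7 + (-8400)*c1^2*c2^5*c3 + 9660*c1^3*c2^3*c3^2 + (-4644)*c1^3*c2^4*c4 + 4050*c1^4*c2*c3^3 + 5562*c1^4*c2^2*c3*c4 + (-774)*c1^5*c3^2*c4 + (-1518)*c1^5*c2*c4^2

private noncomputable def Gc4 (c1 c2 c3 c4 : ℝ) : ℝ :=
  (-960)*c2^8 + (-13440)*c1*c2^6*c3 + (-1800)*c1^2*c2^4*c3^2 + (-14592)*c1^2*c2^5*c4 + 18780*c1^3*c2^2*c3^3 + 8484*c1^3*c2^3*c3*c4 + 600*c1^4*c3^4 + 9132*c1^4*c2*c3^2*c4 + (-1188)*c1^4*c2^2*c4^2 + (-2088)*c1^5*c3*c4^2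

private noncomputable def Gc5 (c1 c2 c3 c4 : ℝ) : ℝ :=
  (-7200)*c2^7*c3 + (-25200)*c1*c2^5*c3^2 + (-19200)*c1*c2^6*c4 + 24300*c1^2*c2^3*c3^3 + (-25440)*c1^2*c2^4*c3*c4 + 10254*c1^3*c2*c3^4 + 47190*c1^3*c2^2*c3^2*c4 + (-5868)*c1^3*c2^3*c4^2 + 1590*c1^4*c3^3*c4 + 2802*c1^4*c2*c3*c4^2 + (-1356)*c1^5*c4^3

private noncomputable def Gc6 (c1 c2 c3 c4 : ℝ) : ℝ :=
  (-21600)*c2^6*c3^2 + (-9600)*c2^7*c4 + (-10800)*c1*c2^4*c3^3 + (-76800)*c1*c2^5*c3*c4 + 32400*c1^2*c2^2*c3^4 + 49680*c1^2*c2^3*c3^2*c4 + (-30720)*c1^2*c2^4*c4^2 + 720*c1^3*c3^5 + 37704*c1^3*c2*c3^3*c4 + 25752*c1^3*c2^2*c3*c4^2 + 72*c1^4*c3^2*c4^2 + (-2808)*c1^4*c2*c4^3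

private noncomputable def Gc7 (c1 c2 c3 c4 : ℝ) : ℝ :=
  (-32400)*c2^5*c3^3 + (-57600)*c2^6*c3*c4 + 20250*c1*c2^3*c3^4 + (-72000)*c1*c2^4*c3^2*c4 + (-57600)*c1*c2^5*c4^2 + 12150*c1^2*c2*c3^5 + 123120*c1^2*c2^2*c3^3*c4 + 2880*c1^2*c2^3*c3*c4^2 + 2526*c1^3*c3^4*c4 + 41592*c1^3*c2*c3^2*c4^2 + (-5004)*c1^3*c2^2*c4^3 + (-2538)*c1^4*c3*c4^3

private noncomputable def Gc8 (c1 c2 c3 c4 : ℝ) : ℝ :=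
  (-24300)*c2^4*c3^4 + (-129600)*c2^5*c3^2*c4 + (-38400)*c2^6*c4^2 + 24300*c1*c2^2*c3^5 + 64800*c1*c2^3*c3^3*c4 + (-134400)*c1*c2^4*c3*c4^2 + 59940*c1^2*c2*c3^4*c4 + 146880*c1^2*c2^2*c3^2*c4^2 + (-26880)*c1^2*c2^3*c4^3 + 744*c1^3*c3^3*c4^2 + 7092*c1^3*c2*c3*c4^3 + (-1656)*c1^4*c4^4

private noncomputable def Gc9 (c1 c2 c3 c4 : ℝ) : ℝ :=
  (-7290)*c2^3*c3^5 + (-129600)*c2^4*c3^3*c4 + (-172800)*c2^5*c3*c4^2 + 7290*c1*c2*c3^6 + 129600*c1*c2^2*c3^4*c4 + 43200*c1*c2^3*c3^2*c4^2 + (-76800)*c1*c2^4*c4^3 + (-1458)*c1^2*c3^5*c4 + 103680*c1^2*c2*c3^3*c4^2 + 42240*c1^2*c2^2*c3*c4^3 + (-6894)*c1^3*c3^2*c4^3 + (-7536)*c1^3*c2*c4^4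

private noncomputable def Gc10 (c1 c2 c3 c4 : ℝ) : ℝ :=
  (-48600)*c2^3*c3^4*c4 + (-259200)*c2^4*c3^2*c4^2 + (-76800)*c2^5*c4^3 + 48600*c1*c2*c3^5*c4 + 259200*c1*c2^2*c3^3*c4^2 + (-38400)*c1*c2^3*c3*c4^3 + (-9720)*c1^2*c3^4*c4^2 + 63360*c1^2*c2*c3^2*c4^3 + (-15360)*c1^2*c2^2*c4^4 + (-9792)*c1^3*c3*c4^4

private noncomputable def Gc11 (c1 c2 c3 c4 : ℝ) : ℝ :=
  (-129600)*c2^3*c3^3*c4^2 + (-230400)*c2^4*c3*c4^3 + 129600*c1*c2*c3^4*c4^2 + 230400*c1*c2^2*c3^2*c4^3 + (-38400)*c1*c2^3*c4^4 + (-25920)*c1^2*c3^3*c4^3 + (-7680)*c1^2*c2*c3*c4^4 + (-3984)*c1^3*c4^5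

private noncomputable def Gc12 (c1 c2 c3 c4 : ℝ) : ℝ :=
  (-172800)*c2^3*c3^2*c4^3 + (-76800)*c2^4*c4^4 + 172800*c1*c2*c3^3*c4^3 + 76800*c1*c2^2*c3*c4^4 + (-34560)*c1^2*c3^2*c4^4 + (-15360)*c1^2*c2*c4^5

private noncomputable def Gc13 (c1 c2 c3 c4 : ℝ) : ℝ :=
  (-115200)*c2^3*c3*c4^4 + 115200*c1*c2*c3^2*c4^4 + (-23040)*c1^2*c3*c4^5

private noncomputable def Gc14 (c1 c2 c3 c4 : ℝ) : ℝ :=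
  (-30720)*c2^3*c4^5 + 30720*c1*c2*c3*c4^5 + (-6144)*c1^2*c4^6

private noncomputable def Gpoly (c1 c2 c3 c4 e : ℝ) : ℝ :=
  Gc0 c1 c2 c3 c4 * e^0 + Gc1 c1 c2 c3 c4 * e^1 + Gc2 c1 c2 c3 c4 * e^2 + Gc3 c1 c2 c3 c4 * e^3 + Gc4 c1 c2 c3 c4 * e^4 + Gc5 c1 c2 c3 c4 * e^5 + Gc6 c1 c2 c3 c4 * e^6 + Gc7 c1 c2 c3 c4 * e^7 + Gc8 c1 c2 c3 c4 * e^8 + Gc9 c1 c2 c3 c4 * e^9 + Gc10 c1 c2 c3 c4 * e^10 + Gc11 c1 c2 c3 c4 * e^11 + Gc12 c1 c2 c3 c4 * e^12 + Gc13 c1 c2 c3 c4 * e^13 + Gc14 c1 c2 c3 c4 * e^14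


private lemma keyIdent (c1 c2 c3 c4 K e : ℝ)
    (h : c1 ^ 3 * K = 5 * c2 ^ 3 - 5 * c1 * c2 * c3 + c1 ^ 2 * c4) :
    c1 ^ 3 * (6 * e * (c1 + 2*c2*e + 3*c3*e^2 + 4*c4*e^3) ^ 5
      - 6 * (c1*e + c2*e^2 + c3*e^3 + c4*e^4) * (c1 + 2*c2*e + 3*c3*e^2 + 4*c4*e^3) ^ 4
      - 3 * (2*c2 + 6*c3*e + 12*c4*e^2) * (c1*e + c2*e^2 + c3*e^3 + c4*e^4) ^ 2
          * (c1 + 2*c2*e + 3*c3*e^2 + 4*c4*e^3) ^ 2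
      + (c1*e + c2*e^2 + c3*e^3 + c4*e^4) ^ 3
          * ((6*c3 + 24*c4*e) * (c1 + 2*c2*e + 3*c3*e^2 + 4*c4*e^3)
             - 3 * (2*c2 + 6*c3*e + 12*c4*e^2) ^ 2)
      - 6 * K * e ^ 4 * (c1 + 2*c2*e + 3*c3*e^2 + 4*c4*e^3) ^ 5)
    = e ^ 5 * Gpoly c1 c2 c3 c4 e := by
  unfold Gpoly Gc0 Gc1 Gc2 Gc3 Gc4 Gc5 Gc6 Gc7 Gc8 Gc9 Gc10 Gc11 Gc12 Gc13 Gc14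
  linear_combination (-(6 * e ^ 4 * (c1 + 2*c2*e + 3*c3*e^2 + 4*c4*e^3) ^ 5)) * h

private lemma analyticAt_deriv {f : ℝ → ℝ} {x : ℝ} (h : AnalyticAt ℝ f x) :
    AnalyticAt ℝ (deriv f) x := by
  obtain ⟨s, hs, hsa⟩ := h.eventually_analyticAt.exists_mem
  obtain ⟨t, hts, hto, hxt⟩ := mem_nhds_iff.mp hs
  exact (AnalyticOnNhd.deriv (fun y hy => hsa y (hts hy))) x hxt

private lemma iteratedDeriv_comp (m n : ℕ) (f : ℝ → ℝ) :
    iteratedDeriv m (iteratedDeriv n f) = iteratedDeriv (m + n) f := by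
  induction m with
  | zero => simp [iteratedDeriv_zero]
  | succ k ih =>
      rw [iteratedDeriv_succ, ih, ← iteratedDeriv_succ, Nat.succ_add]

private lemma taylorBigO {g : ℝ → ℝ} {a : ℝ} (hg : AnalyticAt ℝ g a) (n : ℕ) :
    (fun x : ℝ => g x - ∑ k ∈ Finset.range n,
        (iteratedDeriv k g a / (k.factorial : ℝ)) * (x - a) ^ k)
      =O[nhds a] fun x => (x - a) ^ n := by
  obtain ⟨p, hp⟩ := hg
  have hco : ∀ k, iteratedDeriv k g a = (k.factorial : ℝ) * p.coeff k := by
    intro k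
    obtain ⟨r, hr⟩ := hp
    have h1 := hr.factorial_smul (1 : ℝ) k
    rw [iteratedDeriv_eq_iteratedFDeriv, ← h1,
      FormalMultilinearSeries.apply_eq_pow_smul_coeff]
    simp [nsmul_eq_mul]
  have htend : Tendsto (fun x : ℝ => x - a) (nhds a) (nhds 0) := by
    simpa using (tendsto_id (x := nhds a)).sub_const a
  have h2 := (hp.isBigO_sub_partialSum_pow n).comp_tendsto htend
  have h3 : (fun x : ℝ => g x - ∑ k ∈ Finset.range n,
        (iteratedDeriv k g a / (k.factorial : ℝ)) * (x - a) ^ k)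
      = (fun y => g (a + y) - p.partialSum n y) ∘ (fun x => x - a) := by
    funext x
    simp only [Function.comp_apply, FormalMultilinearSeries.partialSum,
      FormalMultilinearSeries.apply_eq_pow_smul_coeff, smul_eq_mul]
    congr 1
    · congr 1; ring
    · refine Finset.sum_congr rfl fun k _ => ?_
      rw [hco k]
      have : ((k.factorial : ℝ)) ≠ 0 := Nat.cast_ne_zero.mpr k.factorial_ne_zero
      field_simp
  rw [h3]
  have h4 : ((fun y : ℝ => ‖y‖ ^ n) ∘ fun x : ℝ => x - a) = fun x => ‖(x - a) ^ n‖ :=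
    funext fun x => (norm_pow _ _).symm
  rw [h4] at h2
  exact h2.of_norm_right



private lemma mulBigO {α : ℝ} {g h : ℝ → ℝ} {a b : ℕ}
    (hg : g =O[nhds α] fun x => (x - α) ^ a) (hh : h =O[nhds α] fun x => (x - α) ^ b) :
    (fun x => g x * h x) =O[nhds α] fun x => (x - α) ^ (a + b) :=
  (hg.mul hh).congr_right fun x => (pow_add _ _ _).symm

private lemma mulBigO1 {α : ℝ} {g h : ℝ → ℝ} {a : ℕ}
    (hg : g =O[nhds α] fun x => (x - α) ^ a) (hh : ContinuousAt h α) :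
    (fun x => g x * h x) =O[nhds α] fun x => (x - α) ^ a :=
  (hg.mul (Filter.Tendsto.isBigO_one ℝ hh)).congr_right fun x => by simp


private lemma Hbound (α c1 c2 c3 c4 K : ℝ) (f f1 f2 f3 P Q R S pa : ℝ → ℝ)
    (hc1 : c1 ≠ 0)
    (hPa : ∀ x, P x = (x - α) * pa x) (cpa : ContinuousAt pa α)
    (hK : c1 ^ 3 * K = 5 * c2 ^ 3 - 5 * c1 * c2 * c3 + c1 ^ 2 * c4)
    (hP : ∀ x, P x = (c1*(x - α) + c2*(x - α)^2 + c3*(x - α)^3 + c4*(x - α)^4))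
    (hQ : ∀ x, Q x = (c1 + 2*c2*(x - α) + 3*c3*(x - α)^2 + 4*c4*(x - α)^3))
    (hR : ∀ x, R x = (2*c2 + 6*c3*(x - α) + 12*c4*(x - α)^2))
    (hS : ∀ x, S x = (6*c3 + 24*c4*(x - α)))
    (cf : ContinuousAt f α) (cf1 : ContinuousAt f1 α)
    (cf2 : ContinuousAt f2 α) (cf3 : ContinuousAt f3 α)
    (hrf : (fun x => (f x - (P x))) =O[nhds α] fun x => (x - α)^5)
    (hrq : (fun x => (f1 x - (Q x))) =O[nhds α] fun x => (x - α)^4)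
    (hrr : (fun x => (f2 x - (R x))) =O[nhds α] fun x => (x - α)^3)
    (hrs : (fun x => (f3 x - (S x))) =O[nhds α] fun x => (x - α)^2) :
    (fun x => 6*(x - α)*(f1 x)^5 - 6*(f x)*(f1 x)^4 - 3*(f2 x)*(f x)^2*(f1 x)^2 + (f x)^3*((f3 x)*(f1 x) - 3*(f2 x)^2) - 6*K*(x - α)^4*(f1 x)^5) =O[nhds α] fun x => (x - α)^5 := by
  have cP : ContinuousAt P α := by
    rw [show P = fun x => (c1*(x - α) + c2*(x - α)^2 + c3*(x - α)^3 + c4*(x - α)^4) from funext hP]; fun_prop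
  have cQ : ContinuousAt Q α := by
    rw [show Q = fun x => (c1 + 2*c2*(x - α) + 3*c3*(x - α)^2 + 4*c4*(x - α)^3) from funext hQ]; fun_prop
  have cR : ContinuousAt R α := by
    rw [show R = fun x => (2*c2 + 6*c3*(x - α) + 12*c4*(x - α)^2) from funext hR]; fun_prop
  have cS : ContinuousAt S α := by
    rw [show S = fun x => (6*c3 + 24*c4*(x - α)) from funext hS]; fun_prop
  have hdown : ∀ m n : ℕ, n ≤ m →
      (fun x : ℝ => (x - α)^m) =O[nhds α] fun x : ℝ => (x - α)^n := by
    intro m n hmn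
    have h1 : (fun x : ℝ => (x - α)^m) = fun x : ℝ => (x - α)^n * (x - α)^(m - n) := by
      funext x; rw [← pow_add]; congr 1; omega
    rw [h1]
    exact mulBigO1 (isBigO_refl _ _) (by fun_prop)
  have hP1 : (fun x => ((x - α)^1 * (pa x))) =O[nhds α] fun x : ℝ => (x - α)^1 :=
    mulBigO1 (isBigO_refl _ _) cpa
  have hfO : (fun x => f x) =O[nhds α] fun x : ℝ => (x - α)^1 := by
    have h1 : (fun x => (f x - (P x))) =O[nhds α] fun x : ℝ => (x - α)^1 :=
      hrf.trans (hdown 5 1 (by norm_num))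
    have h2 : (fun x => (P x)) =O[nhds α] fun x : ℝ => (x - α)^1 :=
      hP1.congr_left fun x => by rw [hPa]; ring
    exact (h1.add h2).congr_left fun x => by ring

  have hT1 : (fun x => (((x - α)^1 * (f1 x - (Q x))) * (6*((f1 x)^4 + (f1 x)^3*(Q x) + (f1 x)^2*(Q x)^2 + (f1 x)*(Q x)^3 + (Q x)^4)))) =O[nhds α] fun x : ℝ => (x - α)^5 :=
    (mulBigO1 (mulBigO (isBigO_refl (fun x : ℝ => (x - α)^1) (nhds α)) hrq) (by fun_prop))
  have hT2 : (fun x => ((f x - (P x)) * (6*(f1 x)^4))) =O[nhds α] fun x : ℝ => (x - α)^5 :=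
    (mulBigO1 hrf (by fun_prop))
  have hT3 : (fun x => (((((x - α)^1 * (pa x))) * (f1 x - (Q x))) * (6*((f1 x)^3 + (f1 x)^2*(Q x) + (f1 x)*(Q x)^2 + (Q x)^3)))) =O[nhds α] fun x : ℝ => (x - α)^5 :=
    (mulBigO1 (mulBigO hP1 hrq) (by fun_prop))
  have hT4 : (fun x => ((((f2 x - (R x)) * (f x)) * (f x)) * (3*(f1 x)^2))) =O[nhds α] fun x : ℝ => (x - α)^5 :=
    (mulBigO1 (mulBigO (mulBigO hrr hfO) hfO) (by fun_prop))
  have hT5 : (fun x => ((f x - (P x)) * (3*(R x)*((f x) + (P x))*(f1 x)^2))) =O[nhds α] fun x : ℝ => (x - α)^5 :=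
    (mulBigO1 hrf (by fun_prop))
  have hT6 : (fun x => (((((x - α)^1 * (pa x)) * ((x - α)^1 * (pa x))) * (f1 x - (Q x))) * (3*(R x)*((f1 x) + (Q x))))) =O[nhds α] fun x : ℝ => (x - α)^5 :=
    (mulBigO1 (mulBigO (mulBigO hP1 hP1) hrq) (by fun_prop)).trans (hdown 6 5 (by norm_num))
  have hT7 : (fun x => ((f x - (P x)) * (((f x)^2 + (f x)*(P x) + (P x)^2)*((f3 x)*(f1 x) - 3*(f2 x)^2)))) =O[nhds α] fun x : ℝ => (x - α)^5 :=
    (mulBigO1 hrf (by fun_prop))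
  have hT8 : (fun x => ((((((x - α)^1 * (pa x)) * ((x - α)^1 * (pa x))) * ((x - α)^1 * (pa x))) * (f3 x - (S x))) * (f1 x))) =O[nhds α] fun x : ℝ => (x - α)^5 :=
    (mulBigO1 (mulBigO (mulBigO (mulBigO hP1 hP1) hP1) hrs) (by fun_prop))
  have hT9 : (fun x => ((((((x - α)^1 * (pa x)) * ((x - α)^1 * (pa x))) * ((x - α)^1 * (pa x))) * (f1 x - (Q x))) * (S x))) =O[nhds α] fun x : ℝ => (x - α)^5 :=
    (mulBigO1 (mulBigO (mulBigO (mulBigO hP1 hP1) hP1) hrq) (by fun_prop)).trans (hdown 7 5 (by norm_num))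
  have hT10 : (fun x => ((((((x - α)^1 * (pa x)) * ((x - α)^1 * (pa x))) * ((x - α)^1 * (pa x))) * (f2 x - (R x))) * (3*((f2 x) + (R x))))) =O[nhds α] fun x : ℝ => (x - α)^5 :=
    (mulBigO1 (mulBigO (mulBigO (mulBigO hP1 hP1) hP1) hrr) (by fun_prop)).trans (hdown 6 5 (by norm_num))
  have hT11 : (fun x => (((x - α)^4 * (f1 x - (Q x))) * (6*K*((f1 x)^4 + (f1 x)^3*(Q x) + (f1 x)^2*(Q x)^2 + (f1 x)*(Q x)^3 + (Q x)^4)))) =O[nhds α] fun x : ℝ => (x - α)^5 :=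
    (mulBigO1 (mulBigO (isBigO_refl (fun x : ℝ => (x - α)^4) (nhds α)) hrq) (by fun_prop)).trans (hdown 8 5 (by norm_num))
  have hdiff : (fun x => (((x - α)^1 * (f1 x - (Q x))) * (6*((f1 x)^4 + (f1 x)^3*(Q x) + (f1 x)^2*(Q x)^2 + (f1 x)*(Q x)^3 + (Q x)^4))) - ((f x - (P x)) * (6*(f1 x)^4)) - (((((x - α)^1 * (pa x))) * (f1 x - (Q x))) * (6*((f1 x)^3 + (f1 x)^2*(Q x) + (f1 x)*(Q x)^2 + (Q x)^3))) - ((((f2 x - (R x)) * (f x)) * (f x)) * (3*(f1 x)^2)) - ((f x - (P x)) * (3*(R x)*((f x) + (P x))*(f1 x)^2)) - (((((x - α)^1 * (pa x)) * ((x - α)^1 * (pa x))) * (f1 x - (Q x))) * (3*(R x)*((f1 x) + (Q x)))) + ((f x - (P x)) * (((f x)^2 + (f x)*(P x) + (P x)^2)*((f3 x)*(f1 x) - 3*(f2 x)^2))) + ((((((x - α)^1 * (pa x)) * ((x - α)^1 * (pa x))) * ((x - α)^1 * (pa x))) * (f3 x - (S x))) * (f1 x)) + ((((((x - α)^1 *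 (pa x)) * ((x - α)^1 * (pa x))) * ((x - α)^1 * (pa x))) * (f1 x - (Q x))) * (S x)) - ((((((x - α)^1 * (pa x)) * ((x - α)^1 * (pa x))) * ((x - α)^1 * (pa x))) * (f2 x - (R x))) * (3*((f2 x) + (R x)))) - (((x - α)^4 * (f1 x - (Q x))) * (6*K*((f1 x)^4 + (f1 x)^3*(Q x) + (f1 x)^2*(Q x)^2 + (f1 x)*(Q x)^3 + (Q x)^4)))) =O[nhds α] fun x : ℝ => (x - α)^5 :=
    ((((((((((hT1.sub hT2).sub hT3).sub hT4).sub hT5).sub hT6).add hT7).add hT8).add hT9).sub hT10).sub hT11)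
  have hGc : ContinuousAt (fun x : ℝ => Gpoly c1 c2 c3 c4 (x - α) / c1^3) α := by
    unfold Gpoly Gc0 Gc1 Gc2 Gc3 Gc4 Gc5 Gc6 Gc7 Gc8 Gc9 Gc10 Gc11 Gc12 Gc13 Gc14
    fun_prop
  have hGpolyO : (fun x : ℝ => (x - α)^5 * (Gpoly c1 c2 c3 c4 (x - α) / c1^3))
      =O[nhds α] fun x : ℝ => (x - α)^5 :=
    mulBigO1 (isBigO_refl _ _) hGc
  have hPolyEq : ∀ x : ℝ, (6*(x - α)*(Q x)^5 - 6*(P x)*(Q x)^4 - 3*(R x)*(P x)^2*(Q x)^2 + (P x)^3*((S x)*(Q x) - 3*(R x)^2) - 6*K*(x - α)^4*(Q x)^5)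
      = (x - α)^5 * (Gpoly c1 c2 c3 c4 (x - α) / c1^3) := by
    intro x
    have h := keyIdent c1 c2 c3 c4 K (x - α) hK
    rw [hP, hQ, hR, hS]
    calc 6*(x - α)*(c1 + 2*c2*(x - α) + 3*c3*(x - α)^2 + 4*c4*(x - α)^3)^5 - 6*(c1*(x - α) + c2*(x - α)^2 + c3*(x - α)^3 + c4*(x - α)^4)*(c1 + 2*c2*(x - α) + 3*c3*(x - α)^2 + 4*c4*(x - α)^3)^4 - 3*(2*c2 + 6*c3*(x - α) + 12*c4*(x - α)^2)*(c1*(x - α) + c2*(x - α)^2 + c3*(x - α)^3 + c4*(x - α)^4)^2*(c1 + 2*c2*(x - α) + 3*c3*(x - α)^2 + 4*c4*(x - α)^3)^2 + (c1*(x - α) + c2*(x - α)^2 + c3*(x - α)^3 + c4*(x - α)^4)^3*((6*c3 + 24*c4*(x - α))*(c1 + 2*c2*(x - α) + 3*c3*(x - α)^2 + 4*c4*(x - α)^3) - 3*(2*c2 + 6*c3*(x - α) + 12*c4*(x - α)^2)^2) - 6*K*(x - α)^4*(c1 + 2*c2*(x - α) + 3*c3*(x - α)^2 + 4*c4*(x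 - α)^3)^5
        = c1^3 * (6*(x - α)*(c1 + 2*c2*(x - α) + 3*c3*(x - α)^2 + 4*c4*(x - α)^3)^5 - 6*(c1*(x - α) + c2*(x - α)^2 + c3*(x - α)^3 + c4*(x - α)^4)*(c1 + 2*c2*(x - α) + 3*c3*(x - α)^2 + 4*c4*(x - α)^3)^4 - 3*(2*c2 + 6*c3*(x - α) + 12*c4*(x - α)^2)*(c1*(x - α) + c2*(x - α)^2 + c3*(x - α)^3 + c4*(x - α)^4)^2*(c1 + 2*c2*(x - α) + 3*c3*(x - α)^2 + 4*c4*(x - α)^3)^2 + (c1*(x - α) + c2*(x - α)^2 + c3*(x - α)^3 + c4*(x - α)^4)^3*((6*c3 + 24*c4*(x - α))*(c1 + 2*c2*(x - α) + 3*c3*(x - α)^2 + 4*c4*(x - α)^3) - 3*(2*c2 + 6*c3*(x - α) + 12*c4*(x - α)^2)^2) - 6*K*(x - α)^4*(c1 + 2*c2*(x - α) + 3*c3*(x - α)^2 + 4*c4*(x - α)^3)^5) / c1^3 :=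
          (mul_div_cancel_left₀ _ (pow_ne_zero 3 hc1)).symm
      _ = (x - α)^5 * Gpoly c1 c2 c3 c4 (x - α) / c1^3 := by rw [h]
      _ = (x - α)^5 * (Gpoly c1 c2 c3 c4 (x - α) / c1^3) := mul_div_assoc _ _ _
  have hPolyO : (fun x => 6*(x - α)*(Q x)^5 - 6*(P x)*(Q x)^4 - 3*(R x)*(P x)^2*(Q x)^2 + (P x)^3*((S x)*(Q x) - 3*(R x)^2) - 6*K*(x - α)^4*(Q x)^5) =O[nhds α] fun x : ℝ => (x - α)^5 :=
    hGpolyO.congr_left fun x => (hPolyEq x).symm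
  exact (hPolyO.add hdiff).congr_left fun x => by rw [hPa]; ring

theorem schroder_error (f : ℝ → ℝ) (α : ℝ)
    (hf : AnalyticAt ℝ f α) (hroot : f α = 0) (hf' : deriv f α ≠ 0)
    (hreg : ∀ᶠ x in nhds α, deriv f x ≠ 0)
    (u L M z : ℝ → ℝ)
    (hu : ∀ x, u x = f x / deriv f x)
    (hL : ∀ x, L x = iteratedDeriv 2 f x * u x / deriv f x)
    (hM : ∀ x, M x = iteratedDeriv 3 f x / deriv f x
      - 3 * (iteratedDeriv 2 f x / deriv f x) ^ 2)
    (hz : ∀ x, z x = x - (1 + L x / 2 - M x * u x ^ 2 / 6) * u x) :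
    ∃ C > 0, ∃ δ > 0, ∀ x : ℝ, |x - α| < δ →
      |z x - α -
        (5 * (iteratedDeriv 2 f α / (2 * deriv f α)) ^ 3
          - 5 * (iteratedDeriv 2 f α / (2 * deriv f α))
              * (iteratedDeriv 3 f α / (6 * deriv f α))
          + iteratedDeriv 4 f α / (24 * deriv f α)) * (x - α) ^ 4|
        ≤ C * |x - α| ^ 5 := by
  have hfd1 : AnalyticAt ℝ (deriv f) α := analyticAt_deriv hf
  have h2eq : iteratedDeriv 2 f = deriv (deriv f) := by
    rw [iteratedDeriv_succ, iteratedDeriv_one]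
  have h3eq : iteratedDeriv 3 f = deriv (iteratedDeriv 2 f) := iteratedDeriv_succ
  have hfd2 : AnalyticAt ℝ (iteratedDeriv 2 f) α := by
    rw [h2eq]; exact analyticAt_deriv hfd1
  have hfd3 : AnalyticAt ℝ (iteratedDeriv 3 f) α := by
    rw [h3eq]; exact analyticAt_deriv hfd2
  have hD1 : iteratedDeriv 1 (deriv f) = iteratedDeriv 2 f := by
    rw [show deriv f = iteratedDeriv 1 f from iteratedDeriv_one.symm, iteratedDeriv_comp]
  have hD2 : iteratedDeriv 2 (deriv f) = iteratedDeriv 3 f := by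
    rw [show deriv f = iteratedDeriv 1 f from iteratedDeriv_one.symm, iteratedDeriv_comp]
  have hD3 : iteratedDeriv 3 (deriv f) = iteratedDeriv 4 f := by
    rw [show deriv f = iteratedDeriv 1 f from iteratedDeriv_one.symm, iteratedDeriv_comp]
  have hE1 : iteratedDeriv 1 (iteratedDeriv 2 f) = iteratedDeriv 3 f := iteratedDeriv_comp 1 2 f
  have hE2 : iteratedDeriv 2 (iteratedDeriv 2 f) = iteratedDeriv 4 f := iteratedDeriv_comp 2 2 f
  have hF1 : iteratedDeriv 1 (iteratedDeriv 3 f) = iteratedDeriv 4 f := iteratedDeriv_comp 1 3 f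
  set c1 := deriv f α with hc1def
  obtain ⟨c2, hi2⟩ : ∃ c, iteratedDeriv 2 f α = 2 * c :=
    ⟨iteratedDeriv 2 f α / 2, by ring⟩
  obtain ⟨c3, hi3⟩ : ∃ c, iteratedDeriv 3 f α = 6 * c :=
    ⟨iteratedDeriv 3 f α / 6, by ring⟩
  obtain ⟨c4, hi4⟩ : ∃ c, iteratedDeriv 4 f α = 24 * c :=
    ⟨iteratedDeriv 4 f α / 24, by ring⟩
  set K := 5 * (iteratedDeriv 2 f α / (2 * c1)) ^ 3
      - 5 * (iteratedDeriv 2 f α / (2 * c1)) * (iteratedDeriv 3 f α / (6 * c1))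
      + iteratedDeriv 4 f α / (24 * c1) with hKdef
  have hK : c1 ^ 3 * K = 5 * c2 ^ 3 - 5 * c1 * c2 * c3 + c1 ^ 2 * c4 := by
    rw [hKdef, hi2, hi3, hi4]
    field_simp
  have hrf : (fun x => f x - (c1*(x - α) + c2*(x - α)^2 + c3*(x - α)^3 + c4*(x - α)^4))
      =O[nhds α] fun x => (x - α)^5 := by
    refine (taylorBigO hf 5).congr_left fun x => ?_
    simp only [Finset.sum_range_succ, Finset.sum_range_zero, iteratedDeriv_zero, iteratedDeriv_one]
    rw [hroot, hi2, hi3, hi4, ← hc1def]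
    simp only [Nat.factorial]
    push_cast
    ring
  have hrq : (fun x => deriv f x - (c1 + 2*c2*(x - α) + 3*c3*(x - α)^2 + 4*c4*(x - α)^3))
      =O[nhds α] fun x => (x - α)^4 := by
    refine (taylorBigO hfd1 4).congr_left fun x => ?_
    simp only [Finset.sum_range_succ, Finset.sum_range_zero, iteratedDeriv_zero, hD1, hD2, hD3]
    rw [hi2, hi3, hi4, ← hc1def]
    simp only [Nat.factorial]
    push_cast
    ring
  have hrr : (fun x => iteratedDeriv 2 f x - (2*c2 + 6*c3*(x - α) + 12*c4*(x - α)^2))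
      =O[nhds α] fun x => (x - α)^3 := by
    refine (taylorBigO hfd2 3).congr_left fun x => ?_
    simp only [Finset.sum_range_succ, Finset.sum_range_zero, iteratedDeriv_zero, hE1, hE2]
    rw [hi2, hi3, hi4]
    simp only [Nat.factorial]
    push_cast
    ring
  have hrs : (fun x => iteratedDeriv 3 f x - (6*c3 + 24*c4*(x - α)))
      =O[nhds α] fun x => (x - α)^2 := by
    refine (taylorBigO hfd3 2).congr_left fun x => ?_
    simp only [Finset.sum_range_succ, Finset.sum_range_zero, iteratedDeriv_zero, hF1]
    rw [hi3, hi4]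
    simp only [Nat.factorial]
    push_cast
    ring
  have hH := Hbound α c1 c2 c3 c4 K f (deriv f) (iteratedDeriv 2 f) (iteratedDeriv 3 f)
    (fun x => c1*(x - α) + c2*(x - α)^2 + c3*(x - α)^3 + c4*(x - α)^4)
    (fun x => c1 + 2*c2*(x - α) + 3*c3*(x - α)^2 + 4*c4*(x - α)^3)
    (fun x => 2*c2 + 6*c3*(x - α) + 12*c4*(x - α)^2)
    (fun x => 6*c3 + 24*c4*(x - α))
    (fun x => c1 + c2*(x - α) + c3*(x - α)^2 + c4*(x - α)^3)
    hf' (fun x => by ring) (by fun_prop) hK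
    (fun x => rfl) (fun x => rfl) (fun x => rfl) (fun x => rfl)
    hf.continuousAt hfd1.continuousAt hfd2.continuousAt hfd3.continuousAt
    hrf hrq hrr hrs
  have cd1 : ContinuousAt (deriv f) α := hfd1.continuousAt
  have hinv : ContinuousAt (fun x => (6*(deriv f x)^5)⁻¹) α := by
    apply ContinuousAt.inv₀
    · fun_prop
    · simp only [← hc1def]
      positivity
  have hev : (fun x => z x - α - K * (x - α)^4) =ᶠ[nhds α] fun x =>
      (6*(x - α)*(deriv f x)^5 - 6*(f x)*(deriv f x)^4
        - 3*(iteratedDeriv 2 f x)*(f x)^2*(deriv f x)^2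
        + (f x)^3*((iteratedDeriv 3 f x)*(deriv f x) - 3*(iteratedDeriv 2 f x)^2)
        - 6*K*(x - α)^4*(deriv f x)^5) * (6*(deriv f x)^5)⁻¹ := by
    filter_upwards [hreg] with x hx
    rw [hz x, hL x, hM x, hu x]
    field_simp
    ring
  have hfinal : (fun x => z x - α - K * (x - α)^4) =O[nhds α] fun x => (x - α)^5 :=
    hev.trans_isBigO (mulBigO1 hH hinv)
  obtain ⟨C, hC⟩ := Asymptotics.isBigO_iff.mp hfinal
  rw [Metric.eventually_nhds_iff] at hC
  obtain ⟨δ, hδ, hball⟩ := hC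
  refine ⟨max C 1, lt_of_lt_of_le one_pos (le_max_right _ _), δ, hδ, fun x hx => ?_⟩
  have h := hball (y := x) (by rwa [Real.dist_eq])
  simp only [Real.norm_eq_abs, abs_pow] at h
  calc |z x - α - K * (x - α)^4| ≤ C * |x - α|^5 := h
    _ ≤ max C 1 * |x - α|^5 := by
        apply mul_le_mul_of_nonneg_right (le_max_left _ _) (by positivity)
end
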